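/- arXiv:math/0703744 — 3 statements merged into one kernel-verified Lean document; each statement's English description precedes it below -/
import Mathlib

section
/- Let G be an abelian group and let φ, ψ : G → G be two endomorphisms. If either the Reidemeister coincidence number R(φ,ψ) or the number of coincidence points of the induced maps φ̂, ψ̂ on the unitary dual Ĝ (i.e. the number of characters χ of G with χ∘φ = χ∘ψ) is finite, then the two numbers are equal: R(φ,ψ) = #Coin(φ̂,ψ̂). -/
/-- The `(φ,ψ)`-bitwisted conjugacy class of `x`:
`x'` is in the class of `x` iff `x' = ψ(γ) * x * φ(γ)⁻¹` for some `γ`. -/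
def twistedClass {G : Type*} [Group G] (φ ψ : G → G) (x : G) : Set G :=
  {x' | ∃ γ : G, x' = ψ γ * x * (φ γ)⁻¹}

/-- Embedding of the rational circle into the real circle. -/
noncomputable def ratToRealCircle : AddCircle (1 : ℚ) →+ AddCircle (1 : ℝ) :=
  QuotientAddGroup.lift _
    ((QuotientAddGroup.mk' _).comp (Rat.castHom ℝ).toAddMonoidHom) (by
      intro q hq
      rw [AddMonoidHom.mem_ker]
      rw [AddSubgroup.mem_zmultiples_iff] at hq
      obtain ⟨n, hn⟩ := hq
      simp only [AddMonoidHom.comp_apply, RingHom.toAddMonoidHom_eq_coe,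
        AddMonoidHom.coe_coe, QuotientAddGroup.mk'_apply, QuotientAddGroup.eq_zero_iff,
        AddSubgroup.mem_zmultiples_iff]
      exact ⟨n, by simpa [zsmul_eq_mul] using congrArg (fun x : ℚ => (x:ℝ)) hn⟩)

lemma ratToRealCircle_injective : Function.Injective ratToRealCircle := by
  rw [injective_iff_map_eq_zero]
  intro a ha
  induction a using QuotientAddGroup.induction_on with
  | H q =>
    simp only [ratToRealCircle, QuotientAddGroup.lift_mk, AddMonoidHom.comp_apply,
      RingHom.toAddMonoidHom_eq_coe, AddMonoidHom.coe_coe, QuotientAddGroup.mk'_apply,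
      QuotientAddGroup.eq_zero_iff, AddSubgroup.mem_zmultiples_iff] at ha
    obtain ⟨n, hn⟩ := ha
    rw [QuotientAddGroup.eq_zero_iff, AddSubgroup.mem_zmultiples_iff]
    refine ⟨n, ?_⟩
    have : ((n • (1:ℚ) : ℚ):ℝ) = ((q:ℚ):ℝ) := by simpa [zsmul_eq_mul] using hn
    exact_mod_cast this

/-- The composite embedding from the rational circle into `Circle`. -/
noncomputable def ratCircleEmb : AddCircle (1 : ℚ) → Circle :=
  AddCircle.toCircle ∘ ratToRealCircle

lemma ratCircleEmb_injective : Function.Injective ratCircleEmb :=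
  (AddCircle.injective_toCircle one_ne_zero).comp ratToRealCircle_injective

lemma ratCircleEmb_add (x y : AddCircle (1:ℚ)) :
    ratCircleEmb (x + y) = ratCircleEmb x * ratCircleEmb y := by
  simp [ratCircleEmb, AddCircle.toCircle_add]

lemma ratCircleEmb_zero : ratCircleEmb 0 = 1 := by
  simp [ratCircleEmb]

/-- Characters into `Circle` separate points of an abelian group. -/
lemma exists_circle_char {A : Type*} [CommGroup A] {a : A} (ha : a ≠ 1) :
    ∃ χ : A →* Circle, χ a ≠ 1 := by
  obtain ⟨c, hc⟩ := CharacterModule.exists_character_apply_ne_zero_of_ne_zero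
    (A := Additive A) (a := Additive.ofMul a) ha
  refine ⟨{ toFun := fun x => ratCircleEmb (c (Additive.ofMul x))
            map_one' := by simpa [ratCircleEmb_zero] using congrArg ratCircleEmb (map_zero c)
            map_mul' := fun x y => by
              rw [← ratCircleEmb_add, ← map_add]; rfl }, ?_⟩
  simp only [MonoidHom.coe_mk, OneHom.coe_mk]
  intro h
  exact hc (ratCircleEmb_injective (h.trans ratCircleEmb_zero.symm))

lemma circle_torsion_finite (n : ℕ) (hn : 0 < n) : {z : Circle | z ^ n = 1}.Finite := by
  have hC : {x : ℂ | x ^ n = 1}.Finite := by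
    have hsub : {x : ℂ | x ^ n = 1} ⊆ ((Polynomial.nthRoots n (1:ℂ)).toFinset : Set ℂ) := by
      intro x hx
      simp only [Finset.coe_sort_coe, Finset.mem_coe, Multiset.mem_toFinset,
        Polynomial.mem_nthRoots hn]
      exact hx
    exact Set.Finite.subset (Finset.finite_toSet _) hsub
  have hinj : Set.InjOn (fun z : Circle => (z:ℂ)) {z : Circle | z ^ n = 1} :=
    fun a _ b _ h => Subtype.ext h
  refine Set.Finite.of_finite_image (hC.subset ?_) hinj
  rintro x ⟨z, hz, rfl⟩
  simp only [Set.mem_setOf_eq] at hz ⊢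
  calc (↑z:ℂ) ^ n = Circle.coeHom z ^ n := rfl
  _ = Circle.coeHom (z ^ n) := (map_pow _ _ _).symm
  _ = 1 := by rw [hz]; rfl

lemma finite_of_finite_circle_chars (A : Type*) [CommGroup A] (h : Finite (A →* Circle)) :
    Finite A := by
  set n := Nat.card (A →* Circle) with hn
  have hn0 : 0 < n := Nat.card_pos
  have key : ∀ (χ : A →* Circle) (a : A), χ a ^ n = 1 := by
    intro χ a
    have h1 : χ ^ n = 1 := pow_card_eq_one'
    calc χ a ^ n = (χ ^ n) a := by simp
    _ = 1 := by rw [h1]; rfl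
  have hT : Finite {z : Circle | z ^ n = 1} := (circle_torsion_finite n hn0).to_subtype
  let F : A → ((A →* Circle) → {z : Circle | z ^ n = 1}) := fun a χ => ⟨χ a, key χ a⟩
  have hF : Function.Injective F := by
    intro a b hab
    by_contra hne
    obtain ⟨χ, hχ⟩ := exists_circle_char (a := a * b⁻¹) (by
      intro h'; exact hne (by rwa [mul_inv_eq_one] at h'))
    have : χ a = χ b := congrArg Subtype.val (congrFun hab χ)
    apply hχ
    rw [map_mul, map_inv, this, mul_inv_cancel]
  exact Finite.of_injective F hF

lemma nat_card_circle_chars (A : Type*) [CommGroup A]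
    (h : Finite A ∨ Finite (A →* Circle)) :
    Nat.card A = Nat.card (A →* Circle) := by
  have hA : Finite A := h.elim id (finite_of_finite_circle_chars A)
  cases nonempty_fintype A
  have e1 : (A →* Circle) ≃ AddChar (Additive A) Circle :=
    (AddChar.toMonoidHomEquiv.trans
      ((MulEquiv.multiplicativeAdditive A).monoidHomCongrLeft (N := Circle)).toEquiv).symm
  have e2 : AddChar (Additive A) Circle ≃ AddChar (Additive A) ℂ :=
    (AddChar.circleEquivComplex (α := Additive A)).toEquiv
  rw [Nat.card_congr (e1.trans e2)]
  rw [Nat.card_eq_fintype_card, Nat.card_eq_fintype_card, AddChar.card_eq]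
  exact Fintype.card_congr Additive.ofMul

/-- **Bitwisted Burnside–Frobenius theorem for abelian groups.**
If `G` is an abelian group and `φ, ψ : G → G` are endomorphisms, and if either the
Reidemeister coincidence number `R(φ,ψ)` (the number of `(φ,ψ)`-conjugacy classes) or the
number of coincidence points of `φ̂, ψ̂` on the unitary dual (characters `χ : G →* Circle`
with `χ ∘ φ = χ ∘ ψ`) is finite, then the two numbers are equal. -/
theorem bitwisted_burnside_frobenius_abelian {G : Type*} [CommGroup G] (φ ψ : G →* G)
    (hfin : (Set.range (twistedClass ⇑φ ⇑ψ)).Finite ∨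
      {χ : G →* Circle | χ.comp φ = χ.comp ψ}.Finite) :
    Nat.card (Set.range (twistedClass ⇑φ ⇑ψ)) =
      Nat.card {χ : G →* Circle | χ.comp φ = χ.comp ψ} := by
  set δ : G →* G := ψ * φ⁻¹ with hδ
  have hδa : ∀ γ, δ γ = ψ γ * (φ γ)⁻¹ := fun γ => rfl
  set H : Subgroup G := δ.range with hH
  -- each twisted class is a fiber of the quotient map
  have hclass : ∀ x : G, twistedClass ⇑φ ⇑ψ x
      = QuotientGroup.mk (s := H) ⁻¹' {(x : G ⧸ H)} := by
    intro x
    ext x'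
    simp only [twistedClass, Set.mem_setOf_eq, Set.mem_preimage, Set.mem_singleton_iff]
    constructor
    · rintro ⟨γ, rfl⟩
      rw [QuotientGroup.eq]
      exact ⟨γ⁻¹, by simp [hδa, mul_comm, mul_assoc, mul_left_comm]⟩
    · intro h
      rw [QuotientGroup.eq] at h
      obtain ⟨γ, hγ⟩ := h
      refine ⟨γ⁻¹, ?_⟩
      have hx : x' = x * (δ γ)⁻¹ := by rw [hγ]; group
      rw [hx]
      simp [hδa, mul_comm, mul_assoc, mul_left_comm]
  let fib : G ⧸ H → Set G := fun q => QuotientGroup.mk ⁻¹' {q}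
  have hrange : Set.range (twistedClass ⇑φ ⇑ψ) = Set.range fib := by
    have hcomp : twistedClass ⇑φ ⇑ψ = fib ∘ QuotientGroup.mk := funext hclass
    rw [hcomp, Function.Surjective.range_comp QuotientGroup.mk_surjective]
  have hfib_inj : Function.Injective fib := by
    intro q q' h
    obtain ⟨x, rfl⟩ := QuotientGroup.mk_surjective q
    have hx : x ∈ fib ((x : G ⧸ H)) := rfl
    rw [h] at hx
    exact hx
  let e1 : (Set.range (twistedClass ⇑φ ⇑ψ)) ≃ G ⧸ H :=
    (Equiv.setCongr hrange).trans (Equiv.ofInjective fib hfib_inj).symm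
  -- characters with χ∘φ = χ∘ψ are characters of the quotient
  have hker : ∀ χ : {χ : G →* Circle | χ.comp φ = χ.comp ψ}, H ≤ (χ : G →* Circle).ker := by
    rintro ⟨χ, hχ⟩ _ ⟨γ, rfl⟩
    have h1 : χ (φ γ) = χ (ψ γ) := DFunLike.congr_fun hχ γ
    simp [MonoidHom.mem_ker, hδa, h1]
  let e2 : {χ : G →* Circle | χ.comp φ = χ.comp ψ} ≃ (G ⧸ H →* Circle) :=
    { toFun := fun χp => QuotientGroup.lift H χp.1 (hker χp)
      invFun := fun η => ⟨η.comp (QuotientGroup.mk' H), by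
        ext γ
        have hq : ((φ γ : G) : G ⧸ H) = ((ψ γ : G) : G ⧸ H) := by
          rw [QuotientGroup.eq]
          exact ⟨γ, by simp [hδa, mul_comm, mul_assoc, mul_left_comm]⟩
        show (η ((φ γ : G) : G ⧸ H) : ℂ) = (η ((ψ γ : G) : G ⧸ H) : ℂ)
        rw [hq]⟩
      left_inv := fun χp => Subtype.ext (by ext x; rfl)
      right_inv := fun η => by
        ext x
        rfl }
  rw [Nat.card_congr e1, Nat.card_congr e2]
  apply nat_card_circle_chars
  rcases hfin with h | h
  · have := h.to_subtype
    exact Or.inl (Finite.of_equiv _ e1)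
  · have := h.to_subtype
    exact Or.inr (Finite.of_equiv _ e2)
end

section
/- For an integer n > 1, if φ is an injective endomorphism of the Baumslag–Solitar group B(1,n), then |φ(a)|_a = 1; that is, the endomorphism induced by φ on the quotient B(1,n)/N⟨b⟩ ≅ ℤ is the identity. -/
@[ext] structure Aff where
  u : ℚˣ
  v : ℚ

namespace Aff

instance : Group Aff where
  mul f g := ⟨f.u * g.u, (f.u : ℚ) * g.v + f.v⟩
  one := ⟨1, 0⟩
  inv f := ⟨f.u⁻¹, -((f.u⁻¹ : ℚˣ) : ℚ) * f.v⟩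
  mul_assoc f g h := by
    refine Aff.ext (mul_assoc _ _ _) ?_
    show (↑(f.u * g.u) : ℚ) * h.v + ((f.u : ℚ) * g.v + f.v)
        = (f.u : ℚ) * ((g.u : ℚ) * h.v + g.v) + f.v
    push_cast; ring
  one_mul f := by refine Aff.ext (one_mul _) ?_; show (1:ℚ) * f.v + 0 = f.v; ring
  mul_one f := by refine Aff.ext (mul_one _) ?_; show (f.u : ℚ) * 0 + f.v = f.v; ring
  inv_mul_cancel f := by
    refine Aff.ext (inv_mul_cancel _) ?_
    show ((f.u⁻¹ : ℚˣ) : ℚ) * f.v + -((f.u⁻¹ : ℚˣ) : ℚ) * f.v = 0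
    ring

@[simp] lemma mul_u (f g : Aff) : (f * g).u = f.u * g.u := rfl
@[simp] lemma mul_v (f g : Aff) : (f * g).v = (f.u : ℚ) * g.v + f.v := rfl
@[simp] lemma one_u : (1 : Aff).u = 1 := rfl
@[simp] lemma one_v : (1 : Aff).v = 0 := rfl
@[simp] lemma inv_u (f : Aff) : f⁻¹.u = f.u⁻¹ := rfl
@[simp] lemma inv_v (f : Aff) : f⁻¹.v = -((f.u⁻¹ : ℚˣ) : ℚ) * f.v := rfl

/-- slope homomorphism. -/
def slope : Aff →* ℚˣ where
  toFun f := f.u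
  map_one' := rfl
  map_mul' _ _ := rfl

/-- translations, as a homomorphism from `Multiplicative ℚ`. -/
def transl : Multiplicative ℚ →* Aff where
  toFun x := ⟨1, x.toAdd⟩
  map_one' := rfl
  map_mul' x y := by refine Aff.ext (by simp) ?_; show (x*y).toAdd = (1:ℚ) * y.toAdd + x.toAdd; simp [add_comm]

@[simp] lemma transl_u (x : Multiplicative ℚ) : (transl x).u = 1 := rfl
@[simp] lemma transl_v (x : Multiplicative ℚ) : (transl x).v = x.toAdd := rfl

end Aff
/-- The single relation `a⁻¹ * b * a * (b ^ n)⁻¹` of the Baumslag–Solitar group `B(1,n)`,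
where `a` is the generator `true` and `b` is the generator `false`. -/
def BSRels (n : ℕ) : Set (FreeGroup Bool) :=
  {(FreeGroup.of true)⁻¹ * FreeGroup.of false * FreeGroup.of true * (FreeGroup.of false ^ n)⁻¹}

/-- The Baumslag–Solitar group `B(1,n) = ⟨a, b : a⁻¹ * b * a = b ^ n⟩`. -/
abbrev BS (n : ℕ) : Type := PresentedGroup (BSRels n)

/-- The generator `a` of `B(1,n)`. -/
def BSa (n : ℕ) : BS n := PresentedGroup.of true

/-- The generator `b` of `B(1,n)`. -/
def BSb (n : ℕ) : BS n := PresentedGroup.of false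

/-- The exponent-sum homomorphism `| |_a : B(1,n) → ℤ` (valued in `Multiplicative ℤ`),
sending `a ↦ 1` and `b ↦ 0`: it associates to each word the sum of the exponents of `a`. -/
def expSumA (n : ℕ) : BS n →* Multiplicative ℤ :=
  PresentedGroup.toGroup (f := fun x : Bool => if x then Multiplicative.ofAdd (1 : ℤ) else 1)
    (by
      rintro r hr
      simp only [BSRels, Set.mem_singleton_iff] at hr
      subst hr
      simp)

namespace BSAux

variable {n : ℕ}

/-- `n` as a unit of `ℚ`. -/
def nu (n : ℕ) (hn : 0 < n) : ℚˣ := Units.mk0 (n : ℚ) (by exact_mod_cast hn.ne')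

@[simp] lemma nu_coe (hn : 0 < n) : ((nu n hn : ℚˣ) : ℚ) = (n : ℚ) := rfl

/-- The affine representation of `BS(1,n)`: `a ↦ (x ↦ x/n)`, `b ↦ (x ↦ x + 1)`. -/
def rho (n : ℕ) (hn : 0 < n) : BS n →* Aff :=
  PresentedGroup.toGroup (f := fun x : Bool => if x then ⟨(nu n hn)⁻¹, 0⟩ else ⟨1, 1⟩)
    (by
      rintro r hr
      simp only [BSRels, Set.mem_singleton_iff] at hr
      subst hr
      simp only [map_mul, map_inv, map_pow, FreeGroup.lift_apply_of, if_true, if_false,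
        Bool.false_eq_true, reduceIte]
      have hpow : (⟨1, 1⟩ : Aff) ^ n = ⟨1, (n : ℚ)⟩ := by
        have h1 : (⟨1, 1⟩ : Aff) = Aff.transl (Multiplicative.ofAdd (1 : ℚ)) := rfl
        rw [h1, ← map_pow]
        refine Aff.ext rfl ?_
        show (Multiplicative.ofAdd (1:ℚ) ^ n).toAdd = (n : ℚ)
        simp
      rw [hpow]
      refine Aff.ext ?_ ?_
      · simp
      · have : ((nu n hn : ℚˣ) : ℚ) ≠ 0 := by
          simpa using (nu n hn).ne_zero
        simp only [Aff.mul_u, Aff.mul_v, Aff.inv_u, Aff.inv_v, Aff.one_u, Aff.one_v, inv_inv]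
        push_cast [nu, Units.val_mk0]
        field_simp
        ring
      )

@[simp] lemma rho_a (hn : 0 < n) : rho n hn (BSa n) = ⟨(nu n hn)⁻¹, 0⟩ := by
  simp [rho, BSa, PresentedGroup.toGroup.of]

@[simp] lemma rho_b (hn : 0 < n) : rho n hn (BSb n) = ⟨1, 1⟩ := by
  simp [rho, BSb, PresentedGroup.toGroup.of]

@[simp] lemma expSumA_a : expSumA n (BSa n) = Multiplicative.ofAdd (1 : ℤ) := by
  simp [expSumA, BSa, PresentedGroup.toGroup.of]

@[simp] lemma expSumA_b : expSumA n (BSb n) = 1 := by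
  simp [expSumA, BSb, PresentedGroup.toGroup.of]

/-- The defining relation holds in `BS n`. -/
lemma bs_rel : (BSa n)⁻¹ * BSb n * BSa n = (BSb n) ^ n := by
  have : ((BSa n)⁻¹ * BSb n * BSa n) * ((BSb n) ^ n)⁻¹ = 1 := by
    have hmem : (FreeGroup.of true)⁻¹ * FreeGroup.of false * FreeGroup.of true *
        (FreeGroup.of false ^ n)⁻¹ ∈ Subgroup.normalClosure (BSRels n) :=
      Subgroup.subset_normalClosure (by simp [BSRels])
    have := (PresentedGroup.mk_eq_one_iff (rels := BSRels n)).2 hmem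
    simpa [BSa, BSb, PresentedGroup.of, map_mul, map_inv, map_pow] using this
  exact mul_inv_eq_one.mp this


/-- Conjugation of powers of `b` by `a`. -/
lemma conj_b_zpow (σ : ℤ) : (BSa n)⁻¹ * (BSb n) ^ σ * BSa n = (BSb n) ^ (σ * n) := by
  have h : (BSa n)⁻¹ * (BSb n) ^ σ * ((BSa n)⁻¹)⁻¹ = ((BSa n)⁻¹ * BSb n * ((BSa n)⁻¹)⁻¹) ^ σ :=
    conj_zpow.symm
  rw [inv_inv] at h
  rw [h, bs_rel, ← zpow_natCast, ← zpow_mul, mul_comm]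

lemma conj_b_zpow_pow (d : ℕ) (σ : ℤ) :
    (BSa n) ^ (-(d:ℤ)) * (BSb n) ^ σ * (BSa n) ^ (d:ℤ) = (BSb n) ^ (σ * (n:ℤ) ^ d) := by
  induction d generalizing σ with
  | zero => simp
  | succ m ih =>
    have key : (BSa n) ^ (-((m:ℤ)+1)) * (BSb n) ^ σ * (BSa n) ^ ((m:ℤ)+1)
        = (BSa n) ^ (-(m:ℤ)) * ((BSa n)⁻¹ * (BSb n) ^ σ * (BSa n)) * (BSa n) ^ (m:ℤ) := by
      group
    push_cast
    rw [key, conj_b_zpow, ih]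
    congr 1

    ring

/-- `cterm m σ = aᵐ bᵠ a⁻ᵐ`. -/
def cterm (n : ℕ) (m : ℕ) (σ : ℤ) : BS n :=
  (BSa n) ^ (m:ℤ) * (BSb n) ^ σ * (BSa n) ^ (-(m:ℤ))

lemma cterm_shift (m d : ℕ) (σ : ℤ) : cterm n m σ = cterm n (m + d) (σ * (n:ℤ) ^ d) := by
  unfold cterm
  rw [← conj_b_zpow_pow d σ]
  push_cast
  group

lemma cterm_mul (m m' : ℕ) (σ σ' : ℤ) :
    cterm n m σ * cterm n m' σ' =
      cterm n (max m m') (σ * (n:ℤ) ^ (max m m' - m) + σ' * (n:ℤ) ^ (max m m' - m')) := by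
  have h1 : cterm n m σ = cterm n (max m m') (σ * (n:ℤ) ^ (max m m' - m)) := by
    have := cterm_shift (n := n) m (max m m' - m) σ
    rwa [Nat.add_sub_cancel' (le_max_left m m')] at this
  have h2 : cterm n m' σ' = cterm n (max m m') (σ' * (n:ℤ) ^ (max m m' - m')) := by
    have := cterm_shift (n := n) m' (max m m' - m') σ'
    rwa [Nat.add_sub_cancel' (le_max_right m m')] at this
  rw [h1, h2]
  unfold cterm
  rw [zpow_add]
  group

lemma cterm_inv (m : ℕ) (σ : ℤ) : (cterm n m σ)⁻¹ = cterm n m (-σ) := by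
  unfold cterm
  group

/-- Conjugate of `b^σ` by an arbitrary power of `a` is a `cterm`. -/
lemma conj_cterm (j : ℤ) (σ : ℤ) :
    ∃ m : ℕ, ∃ σ' : ℤ, (BSa n) ^ j * (BSb n) ^ σ * (BSa n) ^ (-j) = cterm n m σ' := by
  rcases le_or_gt 0 j with h | h
  · refine ⟨j.toNat, σ, ?_⟩
    unfold cterm
    rw [Int.toNat_of_nonneg h]
  · refine ⟨0, σ * (n:ℤ) ^ (-j).toNat, ?_⟩
    have key := conj_b_zpow_pow (n := n) (-j).toNat σ
    rw [Int.toNat_of_nonneg (by omega : (0:ℤ) ≤ -j), neg_neg] at key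
    unfold cterm
    rw [key]
    group

/-- The subgroup `S` of elements `aᵐ bᵠ a⁻ᵐ`; this is the normal closure of `b`. -/
def S (n : ℕ) : Subgroup (BS n) where
  carrier := {z | ∃ m : ℕ, ∃ σ : ℤ, z = cterm n m σ}
  one_mem' := ⟨0, 0, by simp [cterm]⟩
  mul_mem' := by
    rintro x y ⟨m, σ, rfl⟩ ⟨m', σ', rfl⟩
    exact ⟨max m m', _, (cterm_mul m m' σ σ')⟩
  inv_mem' := by
    rintro x ⟨m, σ, rfl⟩
    exact ⟨m, -σ, cterm_inv m σ⟩

lemma conj_mem_S (t : ℤ) {z : BS n} (hz : z ∈ S n) :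
    (BSa n) ^ t * z * (BSa n) ^ (-t) ∈ S n := by
  obtain ⟨m, σ, rfl⟩ := hz
  have : (BSa n) ^ t * cterm n m σ * (BSa n) ^ (-t)
      = (BSa n) ^ (t + m) * (BSb n) ^ σ * (BSa n) ^ (-(t + m)) := by
    unfold cterm
    group
  rw [this]
  obtain ⟨m', σ', h⟩ := conj_cterm (n := n) (t + m) σ
  exact ⟨m', σ', h⟩

/-- Every element of `BS n` has the form `s * aᵗ` with `s ∈ S`. -/
lemma exists_decomp (z : BS n) : ∃ s ∈ S n, ∃ t : ℤ, z = s * (BSa n) ^ t := by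
  set T : Subgroup (BS n) :=
    { carrier := {z | ∃ s ∈ S n, ∃ t : ℤ, z = s * (BSa n) ^ t}
      one_mem' := ⟨1, one_mem _, 0, by simp⟩
      mul_mem' := by
        rintro x y ⟨s, hs, t, rfl⟩ ⟨s', hs', t', rfl⟩
        refine ⟨s * ((BSa n) ^ t * s' * (BSa n) ^ (-t)), mul_mem hs (conj_mem_S t hs'), t + t', ?_⟩
        rw [zpow_add]
        group
      inv_mem' := by
        rintro x ⟨s, hs, t, rfl⟩
        refine ⟨(BSa n) ^ (-t) * s⁻¹ * (BSa n) ^ (-(-t)), conj_mem_S (-t) (inv_mem hs), -t, ?_⟩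
        group } with hT
  have : z ∈ T := by
    apply PresentedGroup.generated_by
    intro j
    cases j
    · exact ⟨cterm n 0 1, ⟨0, 1, rfl⟩, 0, by simp [cterm, BSb]⟩
    · exact ⟨1, one_mem _, 1, by simp [BSa]⟩
  exact this

lemma expSumA_cterm (m : ℕ) (σ : ℤ) : expSumA n (cterm n m σ) = 1 := by
  unfold cterm
  rw [map_mul, map_mul, map_zpow, map_zpow, map_zpow, expSumA_a, expSumA_b]
  group

/-- The kernel of `expSumA` is exactly `S`. -/
lemma mem_S_of_expSumA_eq_one {z : BS n} (hz : expSumA n z = 1) : z ∈ S n := by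
  obtain ⟨s, hs, t, rfl⟩ := exists_decomp z
  obtain ⟨m, σ, rfl⟩ := hs
  rw [map_mul, expSumA_cterm, one_mul, map_zpow, expSumA_a] at hz
  have ht : t = 0 := by
    have := congrArg Multiplicative.toAdd hz
    simpa using this
  subst ht
  exact ⟨m, σ, by rw [zpow_zero, mul_one]⟩


/-- The scaling part of `rho` is determined by `expSumA`. -/
lemma slope_rho (hn : 0 < n) (z : BS n) :
    Aff.slope (rho n hn z) = (nu n hn) ^ (-(expSumA n z).toAdd) := by
  have key : Aff.slope.comp (rho n hn) *
      (zpowersHom ℚˣ (nu n hn)).comp (expSumA n) = 1 := by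
    apply PresentedGroup.ext
    intro x
    cases x <;>
      simp [MonoidHom.mul_apply, zpowersHom_apply, Aff.slope,
        show (PresentedGroup.of true : BS n) = BSa n from rfl,
        show (PresentedGroup.of false : BS n) = BSb n from rfl,
        rho_a, rho_b, expSumA_a, expSumA_b]
  have hz := congrArg (fun f => f z) key
  simp only [MonoidHom.mul_apply, MonoidHom.comp_apply, MonoidHom.one_apply,
    zpowersHom_apply] at hz
  have : Aff.slope (rho n hn z) * (nu n hn) ^ (expSumA n z).toAdd = 1 := hz
  rw [zpow_neg]
  exact eq_inv_of_mul_eq_one_left (by rw [mul_comm] at this; exact this) |>.symm ▸ rfl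

/-- Scalings, as a homomorphism. -/
def diag : ℚˣ →* Aff where
  toFun w := ⟨w, 0⟩
  map_one' := rfl
  map_mul' w w' := by refine Aff.ext rfl ?_; show (0:ℚ) = (w:ℚ) * 0 + 0; ring

lemma diag_conj_transl (w : ℚˣ) (x : ℚ) :
    diag w * Aff.transl (Multiplicative.ofAdd x) * diag w⁻¹
      = Aff.transl (Multiplicative.ofAdd ((w : ℚ) * x)) := by
  refine Aff.ext ?_ ?_ <;> simp [diag, Aff.transl]

end BSAux

/-- For `n > 1` and an injective endomorphism `φ` of the Baumslag–Solitar group `B(1,n)`,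
one has `|φ(a)|_a = 1`; that is, the endomorphism induced by `φ` on the quotient
`B(1,n)/N⟨b⟩ ≅ ℤ` is the identity. -/
theorem bs_injective_endo_induces_id (n : ℕ) (hn : 1 < n)
    (φ : BS n →* BS n) (hφ : Function.Injective φ) :
    expSumA n (φ (BSa n)) = Multiplicative.ofAdd (1 : ℤ) := by
  classical
  have hn0 : 0 < n := by omega
  -- `b ≠ 1` in `BS n`, since its image under `rho` is a nontrivial translation
  have hb : BSb n ≠ 1 := by
    intro h
    have h2 := congrArg (BSAux.rho n hn0) h
    rw [BSAux.rho_b, map_one] at h2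
    exact one_ne_zero (congrArg Aff.v h2)
  -- the defining relation, pushed through `φ`
  have hrel : (φ (BSa n))⁻¹ * φ (BSb n) * φ (BSa n) = (φ (BSb n)) ^ n := by
    rw [← map_inv, ← map_mul, ← map_mul, ← map_pow, BSAux.bs_rel]
  -- `φ b` has exponent sum zero
  have hφb : expSumA n (φ (BSb n)) = 1 := by
    have := congrArg (expSumA n) hrel
    rw [map_mul, map_mul, map_inv, map_pow] at this
    set x := expSumA n (φ (BSb n))
    set y := expSumA n (φ (BSa n))
    have hx : x = x ^ n := by
      have : y⁻¹ * x * y = x ^ n := this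
      rwa [mul_comm, ← mul_assoc, mul_inv_cancel, one_mul] at this
    have := congrArg Multiplicative.toAdd hx
    simp only [toAdd_pow, nsmul_eq_mul] at this
    have ht : x.toAdd = 0 := by
      have : (n - 1 : ℤ) * x.toAdd = 0 := by push_cast; linarith [this]
      have hne : (n - 1 : ℤ) ≠ 0 := by omega
      exact (mul_eq_zero.mp this).resolve_left hne
    have : x = Multiplicative.ofAdd (0 : ℤ) := by
      rw [← ht]; rfl
    simpa using this
  -- hence `φ b = aᵐ bᵠ a⁻ᵐ` with `σ ≠ 0`
  obtain ⟨m, σ, hz⟩ := BSAux.mem_S_of_expSumA_eq_one hφb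
  have hσ : σ ≠ 0 := by
    intro h
    subst h
    have : φ (BSb n) = 1 := by
      rw [hz]; unfold BSAux.cterm; group
    exact hb (hφ (by rw [this, map_one]))
  -- compute the image of `φ b` under `rho`: a translation by `β ≠ 0`
  have hrb : BSAux.rho n hn0 (BSb n) = Aff.transl (Multiplicative.ofAdd (1:ℚ)) := by
    rw [BSAux.rho_b]; rfl
  have hra : BSAux.rho n hn0 (BSa n) = BSAux.diag (BSAux.nu n hn0)⁻¹ := by
    rw [BSAux.rho_a]; rfl
  set u : ℚˣ := (BSAux.nu n hn0)⁻¹ ^ (m:ℤ) with hu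
  set β : ℚ := (u : ℚ) * σ with hβ
  have hβne : β ≠ 0 := mul_ne_zero (Units.ne_zero u) (Int.cast_ne_zero.mpr hσ)
  have hσpow : (Multiplicative.ofAdd (1:ℚ)) ^ σ = Multiplicative.ofAdd ((σ:ℤ) • (1:ℚ)) := by
    rw [ofAdd_zsmul]
  have hZ : BSAux.rho n hn0 (φ (BSb n)) = Aff.transl (Multiplicative.ofAdd β) := by
    rw [hz]
    unfold BSAux.cterm
    rw [map_mul, map_mul, map_zpow, map_zpow, map_zpow, hra, hrb,
        ← map_zpow BSAux.diag, ← map_zpow BSAux.diag, ← map_zpow Aff.transl,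
        hσpow, ← hu]
    have hneg : (BSAux.nu n hn0)⁻¹ ^ (-(m:ℤ)) = u⁻¹ := by rw [hu, zpow_neg]
    rw [hneg]
    have := BSAux.diag_conj_transl u ((σ:ℤ) • (1:ℚ))
    rw [this]
    congr 1
    rw [hβ]
    simp [zsmul_eq_mul]
  -- push the relation into `Aff`
  have hrelA : (BSAux.rho n hn0 (φ (BSa n)))⁻¹ * Aff.transl (Multiplicative.ofAdd β) *
      BSAux.rho n hn0 (φ (BSa n)) = Aff.transl (Multiplicative.ofAdd β) ^ n := by
    rw [← hZ, ← map_inv, ← map_mul, ← map_mul, ← map_pow, hrel]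
  set G := BSAux.rho n hn0 (φ (BSa n)) with hG
  set k : ℤ := (expSumA n (φ (BSa n))).toAdd with hk
  have hGu : G.u = (BSAux.nu n hn0) ^ (-k) := by rw [hG]; exact BSAux.slope_rho hn0 _
  have hpowT : Aff.transl (Multiplicative.ofAdd β) ^ n
      = Aff.transl (Multiplicative.ofAdd ((n:ℚ) * β)) := by
    rw [← map_pow, ← ofAdd_nsmul]
    congr 1
  rw [hpowT] at hrelA
  have hv := congrArg Aff.v hrelA
  simp only [Aff.mul_v, Aff.mul_u, Aff.inv_v, Aff.inv_u, Aff.transl_u, Aff.transl_v,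
    toAdd_ofAdd, Units.val_mul] at hv
  -- hv should reduce to (G.u⁻¹ : ℚ) * β = n * β
  have hveq : ((G.u : ℚ))⁻¹ * β = (n:ℚ) * β := by
    push_cast at hv
    linarith
  have hucoe : ((G.u : ℚ))⁻¹ = (n:ℚ) ^ k := by
    rw [hGu, Units.val_zpow_eq_zpow_val, zpow_neg, inv_inv]
    rfl
  rw [hucoe] at hveq
  have hnk : (n:ℚ) ^ k = (n:ℚ) ^ (1:ℤ) := by
    rw [zpow_one]
    exact mul_right_cancel₀ hβne hveq
  have hk1 : k = 1 := by
    have h0 : (0:ℚ) < (n:ℚ) := by exact_mod_cast hn0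
    have h1 : (n:ℚ) ≠ 1 := by
      have : (1:ℚ) < (n:ℚ) := by exact_mod_cast hn
      exact ne_of_gt this
    exact zpow_right_injective₀ h0 h1 hnk
  have : (expSumA n (φ (BSa n))).toAdd = 1 := by rw [← hk, hk1]
  calc expSumA n (φ (BSa n))
      = Multiplicative.ofAdd (expSumA n (φ (BSa n))).toAdd := rfl
    _ = Multiplicative.ofAdd (1:ℤ) := by rw [this]
end

section
/- For an integer n > 1 and any two injective endomorphisms φ and ψ of the Baumslag–Solitar group B(1,n), the Reidemeister coincidence number R(φ,ψ) is infinite; that is, B(1,n) has infinitely many (φ,ψ)-conjugacy classes. -/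
set_option linter.unusedSectionVars false
set_option linter.unnecessarySeqFocus false

/-! ### The affine model `ℚ ⋊ ℤ` -/

/-- The affine model: the semidirect product `ℚ ⋊ ℤ` where `k : ℤ` acts on `ℚ`
by multiplication by `n ^ k`. -/
@[ext] structure Aff_s16 (n : ℕ) where
  t : ℚ
  k : ℤ

namespace Aff_s16

variable {n : ℕ} [hn : Fact (1 < n)]

set_option linter.unusedSectionVars false

lemma nq_pos : (0 : ℚ) < (n : ℚ) := by
  have := hn.out; positivity

lemma nq_ne : (n : ℚ) ≠ 0 := ne_of_gt nq_pos

instance : Group (Aff_s16 n) where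
  mul x y := ⟨x.t + (n : ℚ) ^ x.k * y.t, x.k + y.k⟩
  one := ⟨0, 0⟩
  inv x := ⟨-((n : ℚ) ^ (-x.k) * x.t), -x.k⟩
  mul_assoc a b c := by
    ext
    · show (a.t + (n : ℚ) ^ a.k * b.t) + (n : ℚ) ^ (a.k + b.k) * c.t
        = a.t + (n : ℚ) ^ a.k * (b.t + (n : ℚ) ^ b.k * c.t)
      rw [zpow_add₀ (nq_ne (n := n))]; ring
    · show (a.k + b.k) + c.k = a.k + (b.k + c.k); ring
  one_mul a := by
    ext
    · show (0 : ℚ) + (n : ℚ) ^ (0 : ℤ) * a.t = a.t; simp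
    · show (0 : ℤ) + a.k = a.k; simp
  mul_one a := by
    ext
    · show a.t + (n : ℚ) ^ a.k * 0 = a.t; simp
    · show a.k + (0 : ℤ) = a.k; simp
  inv_mul_cancel a := by
    ext
    · show -((n : ℚ) ^ (-a.k) * a.t) + (n : ℚ) ^ (-a.k) * a.t = 0; ring
    · show -a.k + a.k = 0; ring

@[simp] lemma mul_t (x y : Aff_s16 n) : (x * y).t = x.t + (n : ℚ) ^ x.k * y.t := rfl
@[simp] lemma mul_k (x y : Aff_s16 n) : (x * y).k = x.k + y.k := rfl
@[simp] lemma one_t : (1 : Aff_s16 n).t = 0 := rfl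
@[simp] lemma one_k : (1 : Aff_s16 n).k = 0 := rfl
@[simp] lemma inv_t (x : Aff_s16 n) : x⁻¹.t = -((n : ℚ) ^ (-x.k) * x.t) := rfl
@[simp] lemma inv_k (x : Aff_s16 n) : x⁻¹.k = -x.k := rfl

/-- Powers of a pure translation. -/
lemma trans_pow (t : ℚ) (m : ℕ) : (⟨t, 0⟩ : Aff_s16 n) ^ m = ⟨m * t, 0⟩ := by
  induction m with
  | zero => ext <;> simp
  | succ m ih => rw [pow_succ, ih]; ext <;> push_cast <;> simp <;> ring

lemma trans_zpow (t : ℚ) (m : ℤ) : (⟨t, 0⟩ : Aff_s16 n) ^ m = ⟨m * t, 0⟩ := by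
  induction m using Int.induction_on with
  | zero => ext <;> simp
  | succ m ih => rw [zpow_add_one, ih]; ext <;> push_cast <;> simp <;> ring
  | pred m ih =>
      rw [zpow_sub_one, ih]; ext <;> push_cast <;> simp <;> ring

lemma vert_zpow (c : ℤ) (m : ℤ) : (⟨0, c⟩ : Aff_s16 n) ^ m = ⟨0, m * c⟩ := by
  induction m using Int.induction_on with
  | zero => ext <;> simp
  | succ m ih => rw [zpow_add_one, ih]; ext <;> simp <;> ring
  | pred m ih => rw [zpow_sub_one, ih]; ext <;> simp <;> ring

end Aff_s16

/-! ### The homomorphism `ρ : BS n → Aff n` -/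

section Rho

variable (n : ℕ) [hn : Fact (1 < n)]

/-- Images of the generators: `a ↦ (0, -1)`, `b ↦ (1, 0)`. -/
def bsGen : Bool → Aff_s16 n := fun x => if x then ⟨0, -1⟩ else ⟨1, 0⟩

lemma bsGen_rel : ∀ r ∈ BSRels n, FreeGroup.lift (bsGen n) r = 1 := by
  intro r hr
  rcases hr with rfl
  have hb : (FreeGroup.lift (bsGen n)) (FreeGroup.of false) = (⟨1, 0⟩ : Aff_s16 n) := by
    simp [bsGen]
  have ha : (FreeGroup.lift (bsGen n)) (FreeGroup.of true) = (⟨0, -1⟩ : Aff_s16 n) := by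
    simp [bsGen]
  simp only [map_mul, map_inv, map_pow, ha, hb, Aff_s16.trans_pow]
  ext <;> simp [Aff_s16.nq_ne (n := n)]

/-- The representation of `BS n` in the affine model. -/
def bsRho : BS n →* Aff_s16 n := PresentedGroup.toGroup (bsGen_rel n)

variable {n}

lemma rho_a : bsRho n (BSa n) = ⟨0, -1⟩ :=
  PresentedGroup.toGroup.of (bsGen_rel n) (x := true)

lemma rho_b : bsRho n (BSb n) = ⟨1, 0⟩ :=
  PresentedGroup.toGroup.of (bsGen_rel n) (x := false)

/-- The height homomorphism value: `π g = (ρ g).k`. -/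
def bsPi (g : BS n) : ℤ := (bsRho n g).k

@[simp] lemma bsPi_mul (g h : BS n) : bsPi (g * h) = bsPi g + bsPi h := by
  simp [bsPi, map_mul]

@[simp] lemma bsPi_one : bsPi (1 : BS n) = 0 := by simp [bsPi]

@[simp] lemma bsPi_inv (g : BS n) : bsPi g⁻¹ = -bsPi g := by
  simp [bsPi, map_inv]

@[simp] lemma bsPi_zpow (g : BS n) (m : ℤ) : bsPi (g ^ m) = m * bsPi g := by
  induction m using Int.induction_on with
  | zero => simp
  | succ m ih => rw [zpow_add_one, bsPi_mul, ih]; push_cast; ring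
  | pred m ih => rw [zpow_sub_one, bsPi_mul, bsPi_inv, ih]; push_cast; ring

@[simp] lemma bsPi_pow (g : BS n) (m : ℕ) : bsPi (g ^ m) = m * bsPi g := by
  simpa using bsPi_zpow g (m : ℤ)

@[simp] lemma bsPi_a : bsPi (BSa n) = -1 := by simp [bsPi, rho_a]

@[simp] lemma bsPi_b : bsPi (BSb n) = 0 := by simp [bsPi, rho_b]

end Rho

/-! ### Structure of `BS n` -/

section Structure

variable {n : ℕ} [hn : Fact (1 < n)]

/-- The defining relation in `BS n`. -/
lemma bs_rel : (BSa n)⁻¹ * BSb n * BSa n = (BSb n) ^ n := by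
  have h : ((PresentedGroup.mk (BSRels n))
      ((FreeGroup.of true)⁻¹ * FreeGroup.of false * FreeGroup.of true *
        (FreeGroup.of false ^ n)⁻¹)) = 1 := by
    apply (QuotientGroup.eq_one_iff _).mpr
    exact Subgroup.subset_normalClosure rfl
  simp only [map_mul, map_inv, map_pow] at h
  have := mul_inv_eq_one.mp h
  simpa [BSa, BSb, PresentedGroup.of] using this

/-- `a * b^n * a⁻¹ = b`. -/
lemma bs_rel' : BSa n * (BSb n) ^ n * (BSa n)⁻¹ = BSb n := by
  rw [← bs_rel]; group

/-- `a * b^(m*n) * a⁻¹ = b^m` for `m : ℤ`. -/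
lemma bs_rel_zpow (m : ℤ) : BSa n * (BSb n) ^ (m * n) * (BSa n)⁻¹ = (BSb n) ^ m := by
  have : (BSb n) ^ (m * (n : ℤ)) = ((BSb n) ^ (n : ℕ)) ^ m := by
    rw [← zpow_natCast, ← zpow_mul, mul_comm]
  rw [this, ← conj_zpow, bs_rel']

/-- Shifting a conjugated power of `b` up by one level. -/
lemma shift_one (J m : ℤ) :
    (BSa n) ^ J * (BSb n) ^ m * (BSa n) ^ (-J)
      = (BSa n) ^ (J + 1) * (BSb n) ^ (m * n) * (BSa n) ^ (-(J + 1)) := by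
  have h := bs_rel_zpow (n := n) m
  calc (BSa n) ^ J * (BSb n) ^ m * (BSa n) ^ (-J)
      = (BSa n) ^ J * (BSa n * (BSb n) ^ (m * n) * (BSa n)⁻¹) * (BSa n) ^ (-J) := by rw [h]
    _ = (BSa n) ^ (J + 1) * (BSb n) ^ (m * n) * (BSa n) ^ (-(J + 1)) := by
        rw [zpow_add_one, neg_add, zpow_add, zpow_neg_one]; group

/-- Shifting up by `c` levels. -/
lemma shift (J m : ℤ) (c : ℕ) :
    (BSa n) ^ J * (BSb n) ^ m * (BSa n) ^ (-J)
      = (BSa n) ^ (J + c) * (BSb n) ^ (m * n ^ c) * (BSa n) ^ (-(J + c)) := by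
  induction c with
  | zero => simp
  | succ c ih =>
      rw [ih, shift_one]
      have h1 : (J + (c : ℤ)) + 1 = J + ((c + 1 : ℕ) : ℤ) := by push_cast; ring
      have h2 : m * (n : ℤ) ^ c * (n : ℤ) = m * (n : ℤ) ^ (c + 1 : ℕ) := by
        push_cast; ring
      rw [h1, h2]

/-- Elements of the kernel level: conjugated powers of `b`. -/
def NSet (n : ℕ) : Set (BS n) :=
  {g | ∃ J m : ℤ, g = (BSa n) ^ J * (BSb n) ^ m * (BSa n) ^ (-J)}

lemma NSet_mul {g h : BS n} (hg : g ∈ NSet n) (hh : h ∈ NSet n) : g * h ∈ NSet n := by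
  obtain ⟨J, m, rfl⟩ := hg
  obtain ⟨J', m', rfl⟩ := hh
  set J₀ : ℤ := max J J' with hJ₀
  have hJ : J₀ = J + ((J₀ - J).toNat : ℤ) := by
    rw [Int.toNat_of_nonneg (by omega : (0:ℤ) ≤ J₀ - J)]; ring
  have hJ' : J₀ = J' + ((J₀ - J').toNat : ℤ) := by
    rw [Int.toNat_of_nonneg (by omega : (0:ℤ) ≤ J₀ - J')]; ring
  rw [shift J m (J₀ - J).toNat, shift J' m' (J₀ - J').toNat, ← hJ, ← hJ']
  refine ⟨J₀, m * n ^ (J₀ - J).toNat + m' * n ^ (J₀ - J').toNat, ?_⟩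
  rw [zpow_add]
  group

lemma NSet_one : (1 : BS n) ∈ NSet n := ⟨0, 0, by simp⟩

lemma NSet_inv {g : BS n} (hg : g ∈ NSet n) : g⁻¹ ∈ NSet n := by
  obtain ⟨J, m, rfl⟩ := hg
  exact ⟨J, -m, by simp [mul_assoc, zpow_neg]⟩

lemma NSet_conj (c : ℤ) {g : BS n} (hg : g ∈ NSet n) :
    (BSa n) ^ c * g * (BSa n) ^ (-c) ∈ NSet n := by
  obtain ⟨J, m, rfl⟩ := hg
  refine ⟨c + J, m, ?_⟩
  rw [zpow_add, neg_add, zpow_add]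
  group

/-- The subgroup of elements of the form `a^J b^m a^{-J} * a^k`. -/
def SGrp (n : ℕ) [Fact (1 < n)] : Subgroup (BS n) where
  carrier := {g | ∃ u ∈ NSet n, ∃ k : ℤ, g = u * (BSa n) ^ k}
  one_mem' := ⟨1, NSet_one, 0, by simp⟩
  mul_mem' := by
    rintro x y ⟨u, hu, k, rfl⟩ ⟨v, hv, l, rfl⟩
    refine ⟨u * ((BSa n) ^ k * v * (BSa n) ^ (-k)), NSet_mul hu (NSet_conj k hv), k + l, ?_⟩
    rw [zpow_add]
    group
  inv_mem' := by
    rintro x ⟨u, hu, k, rfl⟩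
    refine ⟨(BSa n) ^ (-k) * u⁻¹ * (BSa n) ^ (-(-k)), NSet_conj (-k) (NSet_inv hu), -k, ?_⟩
    group

lemma SGrp_eq_top : ∀ g : BS n, g ∈ SGrp n := by
  intro g
  apply PresentedGroup.generated_by
  intro j
  cases j with
  | true => exact ⟨1, NSet_one, 1, by simp [BSa]⟩
  | false => exact ⟨BSb n, ⟨0, 1, by simp⟩, 0, by simp [BSb]⟩

/-- Every element with `π = 0` is a conjugated power of `b`. -/
lemma ker_pi_eq (u : BS n) (h : bsPi u = 0) : u ∈ NSet n := by
  obtain ⟨v, hv, k, rfl⟩ := SGrp_eq_top u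
  obtain ⟨J, m, rfl⟩ := hv
  have hpi : bsPi ((BSa n) ^ J * (BSb n) ^ m * (BSa n) ^ (-J) * (BSa n) ^ k) = -k := by
    simp only [bsPi_mul, bsPi_zpow, bsPi_a, bsPi_b]; ring
  rw [hpi] at h
  have : k = 0 := by omega
  subst this
  exact ⟨J, m, by simp⟩

lemma rho_NSet (J m : ℤ) :
    bsRho n ((BSa n) ^ J * (BSb n) ^ m * (BSa n) ^ (-J))
      = ⟨(n : ℚ) ^ (-J) * (m : ℚ), 0⟩ := by
  rw [map_mul, map_mul, map_zpow, map_zpow, map_zpow, rho_a, rho_b,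
    Aff_s16.vert_zpow, Aff_s16.vert_zpow, Aff_s16.trans_zpow]
  have hJ : J * (-1) = -J := by ring
  ext
  · simp only [Aff_s16.mul_t, Aff_s16.mul_k, hJ, zpow_zero, mul_zero, add_zero, mul_one, zero_add]
  · simp only [Aff_s16.mul_k, hJ]
    ring

end Structure

/-! ### Injective endomorphisms preserve the height -/

section Endo

variable {n : ℕ} [hn : Fact (1 < n)]

lemma b_ne_one : BSb n ≠ 1 := by
  intro h
  have h2 := congrArg (bsRho n) h
  rw [rho_b, map_one] at h2
  have h3 := congrArg Aff_s16.t h2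
  simp at h3

/-- `π (χ b) = 0` for any endomorphism `χ`. -/
lemma pi_phi_b (χ : BS n →* BS n) : bsPi (χ (BSb n)) = 0 := by
  have hrel : (χ (BSa n))⁻¹ * χ (BSb n) * χ (BSa n) = (χ (BSb n)) ^ n := by
    rw [← map_inv, ← map_mul, ← map_mul, ← map_pow, bs_rel]
  have h := congrArg bsPi hrel
  simp only [bsPi_mul, bsPi_inv, bsPi_pow] at h
  have h2 : ((n : ℤ) - 1) * bsPi (χ (BSb n)) = 0 := by linarith
  have hn1 : (1 : ℤ) < (n : ℤ) := by exact_mod_cast hn.out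
  rcases mul_eq_zero.mp h2 with h3 | h3
  · omega
  · exact h3

/-- Key lemma: any injective endomorphism `φ` satisfies `π (φ a) = -1 = π a`. -/
lemma pi_phi_a (φ : BS n →* BS n) (hφ : Function.Injective φ) :
    bsPi (φ (BSa n)) = -1 := by
  have hne : φ (BSb n) ≠ 1 := fun h => b_ne_one (hφ (by simpa using h))
  have hrel : (φ (BSa n))⁻¹ * φ (BSb n) * φ (BSa n) = (φ (BSb n)) ^ n := by
    rw [← map_inv, ← map_mul, ← map_mul, ← map_pow, bs_rel]
  have hπb : bsPi (φ (BSb n)) = 0 := pi_phi_b φ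
  -- so φ b is a conjugated power of b
  obtain ⟨J, m, hu⟩ := ker_pi_eq (φ (BSb n)) hπb
  have hm : m ≠ 0 := by
    rintro rfl
    exact hne (by simp [hu])
  -- transport the relation to the affine group
  have haff := congrArg (bsRho n) hrel
  rw [map_mul, map_mul, map_inv, map_pow, hu, rho_NSet, Aff_s16.trans_pow] at haff
  set x : Aff_s16 n := bsRho n (φ (BSa n)) with hx
  set t₀ : ℚ := (n : ℚ) ^ (-J) * (m : ℚ) with ht₀
  have ht : t₀ ≠ 0 := by
    apply mul_ne_zero (zpow_ne_zero _ (Aff_s16.nq_ne (n := n)))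
    exact_mod_cast hm
  have h1 := congrArg Aff_s16.t haff
  simp only [Aff_s16.mul_t, Aff_s16.mul_k, Aff_s16.inv_t, Aff_s16.inv_k, add_zero] at h1
  have key : (n : ℚ) ^ (-x.k) * t₀ = (n : ℚ) * t₀ := by linarith
  have hpow : (n : ℚ) ^ (-x.k) = (n : ℚ) ^ (1 : ℤ) := by
    rw [zpow_one]
    exact mul_right_cancel₀ ht key
  have hinj := zpow_right_injective₀ (a := (n : ℚ))
    (Aff_s16.nq_pos (n := n)) (ne_of_gt (by exact_mod_cast hn.out)) hpow
  have hk : -x.k = 1 := hinj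
  show x.k = -1
  omega

/-- The subgroup where `bsPi ∘ χ` agrees with `bsPi`. -/
def piSub (χ : BS n →* BS n) : Subgroup (BS n) where
  carrier := {g | bsPi (χ g) = bsPi g}
  mul_mem' := by
    intro x y hx hy
    simp only [Set.mem_setOf_eq] at *
    rw [map_mul, bsPi_mul, bsPi_mul, hx, hy]
  one_mem' := by simp only [Set.mem_setOf_eq, map_one, bsPi_one]
  inv_mem' := by
    intro x hx
    simp only [Set.mem_setOf_eq] at *
    rw [map_inv, bsPi_inv, bsPi_inv, hx]

/-- Injective endomorphisms preserve the height function. -/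
lemma pi_comp (χ : BS n →* BS n) (hχ : Function.Injective χ) (g : BS n) :
    bsPi (χ g) = bsPi g := by
  have hmem : g ∈ piSub χ := by
    apply PresentedGroup.generated_by
    intro j
    cases j with
    | true =>
        show bsPi (χ (BSa n)) = bsPi (BSa n)
        rw [pi_phi_a χ hχ, bsPi_a]
    | false =>
        show bsPi (χ (BSb n)) = bsPi (BSb n)
        rw [pi_phi_b χ, bsPi_b]
  exact hmem

end Endo

/-- For `n > 1` and any two injective endomorphisms `φ, ψ` of the Baumslag–Solitar group
`B(1,n)`, the Reidemeister coincidence number `R(φ,ψ)` is infinite: there are infinitely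
many `(φ,ψ)`-conjugacy classes. -/
theorem bs_reidemeister_infinite (n : ℕ) (hn : 1 < n)
    (φ ψ : BS n →* BS n) (hφ : Function.Injective φ) (hψ : Function.Injective ψ) :
    (Set.range (twistedClass ⇑φ ⇑ψ)).Infinite := by
  haveI : Fact (1 < n) := ⟨hn⟩
  apply Set.infinite_of_injective_forall_mem
    (f := fun k : ℤ => twistedClass ⇑φ ⇑ψ ((BSa n) ^ k))
  · intro k l hkl
    simp only [] at hkl
    have hmem : (BSa n) ^ k ∈ twistedClass ⇑φ ⇑ψ ((BSa n) ^ k) :=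
      ⟨1, by simp⟩
    rw [show twistedClass ⇑φ ⇑ψ ((BSa n) ^ k) = twistedClass ⇑φ ⇑ψ ((BSa n) ^ l) from hkl] at hmem
    obtain ⟨γ, hγ⟩ := hmem
    have hpi := congrArg bsPi hγ
    rw [bsPi_mul, bsPi_mul, bsPi_inv, bsPi_zpow, bsPi_zpow, bsPi_a,
      pi_comp φ hφ, pi_comp ψ hψ] at hpi
    omega
  · intro k
    exact ⟨(BSa n) ^ k, rfl⟩
end
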